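/- Let m ≥ 1 be an integer and let u : (0,∞) → ℝ be locally absolutely continuous with finite energy E(u) < ∞, such that the limits a = lim_{r→0+} u(r) and b = lim_{r→∞} u(r) exist. Then E(u) = (1/2) ∫₀^∞ (u'(r) + (m/r) sin(u(r)))² r dr + m (cos b − cos a); in particular E(u) ≥ m |cos b − cos a|. -/

import Mathlib

/-!
Completing the square gives, for `r > 0` and `c = ± m`,
`(u' + (c/r) sin u)² r = (u'² + m² sin² u / r²) r + 2c u' sin u`,
and `u' sin u = -(cos ∘ u)'` integrates to `cos a - cos b` over `(0,∞)`. Taking `c = m` gives the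
identity, and nonnegativity of the square integral for `c = ± m` gives the bound. The chain rule
for `cos ∘ u` holds because `cos` is Lipschitz and `u` is absolutely continuous on compact
subintervals of `(0,∞)`; the cross term `u' sin u` is integrable by AM–GM since `m ≥ 1`.
-/

open MeasureTheory Filter Set

/-- Local absolute continuity on `(0,∞)`: the fundamental theorem of calculus holds
on every compact subinterval. -/
def LocAC (u : ℝ → ℝ) : Prop :=
  ∀ a b : ℝ, 0 < a → a ≤ b →
    IntervalIntegrable (deriv u) volume a b ∧ u b - u a = ∫ r in a..b, deriv u r

/-- The `m`-corotational energy `E(u) = (1/2) ∫₀^∞ (u'² + m² sin²(u)/r²) r dr`. -/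
noncomputable def corotE (m : ℕ) (u : ℝ → ℝ) : ℝ :=
  (1/2) * ∫ r in Set.Ioi (0:ℝ), (deriv u r ^ 2 + (m:ℝ)^2 * Real.sin (u r) ^ 2 / r ^ 2) * r

open Topology

theorem AbsolutelyContinuousOnInterval.congr {X : Type*} [PseudoMetricSpace X] {f g : ℝ → X}
    {a b : ℝ} (hf : AbsolutelyContinuousOnInterval f a b) (hfg : EqOn f g (uIcc a b)) :
    AbsolutelyContinuousOnInterval g a b := by
  refine hf.congr' ?_
  filter_upwards [mem_inf_of_right (mem_principal_self _)] with E hE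
  exact Finset.sum_congr rfl fun i hi => by rw [hfg (hE.1 i hi).1, hfg (hE.1 i hi).2]

theorem LipschitzWith.comp_absolutelyContinuousOnInterval {X Y : Type*} [PseudoMetricSpace X]
    [PseudoMetricSpace Y] {g : X → Y} {K : NNReal} (hg : LipschitzWith K g) {f : ℝ → X}
    {a b : ℝ} (hf : AbsolutelyContinuousOnInterval f a b) :
    AbsolutelyContinuousOnInterval (g ∘ f) a b := by
  unfold AbsolutelyContinuousOnInterval at hf ⊢
  have hK := hf.const_mul (K : ℝ)
  rw [mul_zero] at hK
  refine squeeze_zero (fun E => Finset.sum_nonneg fun _ _ => dist_nonneg) (fun E => ?_) hK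
  rw [Finset.mul_sum]
  exact Finset.sum_le_sum fun i _ => hg.dist_le_mul _ _

theorem AbsolutelyContinuousOnInterval.integral_deriv_comp_mul_deriv {f g g' : ℝ → ℝ} {K : NNReal}
    {a b : ℝ} (hf : AbsolutelyContinuousOnInterval f a b) (hg : LipschitzWith K g)
    (hg' : ∀ y, HasDerivAt g (g' y) y) :
    ∫ x in a..b, g' (f x) * deriv f x = g (f b) - g (f a) := by
  refine (intervalIntegral.integral_congr_ae ?_).trans
    (hg.comp_absolutelyContinuousOnInterval hf).integral_deriv_eq_sub
  filter_upwards [hf.ae_differentiableAt] with x hx hxab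
  exact (((hg' (f x)).comp x (hx (uIoc_subset_uIcc hxab)).hasDerivAt).deriv).symm

theorem intervalIntegral_tendsto_integral_Ioi_of_tendsto_nhdsGT {E : Type*}
    [NormedAddCommGroup E] [NormedSpace ℝ E] {f : ℝ → E} {A : ℝ} (hf : IntegrableOn f (Ioi A))
    {ι : Type*} {l : Filter ι} [l.IsCountablyGenerated] {a b : ι → ℝ}
    (ha : Tendsto a l (𝓝[>] A)) (hb : Tendsto b l atTop) :
    Tendsto (fun i => ∫ x in a i..b i, f x) l (𝓝 (∫ x in Ioi A, f x)) := by
  have hcover : AECover (volume.restrict (Ioi A)) l fun i => Ioc (a i) (b i) := by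
    simpa only [Ioi_inter_Iic] using
      (aecover_Ioi_of_Ioi (tendsto_nhdsWithin_iff.1 ha).1).inter (aecover_Iic hb)
  refine (hcover.integral_tendsto_of_countably_generated hf).congr' ?_
  filter_upwards [ha (Ioo_mem_nhdsGT (lt_add_one A)), hb.eventually_ge_atTop (A + 1)]
    with i hai hbi
  rw [Measure.restrict_restrict_of_subset (Ioc_subset_Ioi_self.trans (Ioi_subset_Ioi hai.1.le)),
    intervalIntegral.integral_of_le (by linarith [hai.2])]

theorem LocAC.absolutelyContinuousOnInterval {u : ℝ → ℝ} (hu : LocAC u) {a b : ℝ} (ha : 0 < a)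
    (hab : a ≤ b) : AbsolutelyContinuousOnInterval u a b := by
  have hprim := ((LipschitzWith.const (u a)).lipschitzOnWith (s := uIcc a b)
    ).absolutelyContinuousOnInterval.add
    ((hu a b ha hab).1.absolutelyContinuousOnInterval_intervalIntegral left_mem_uIcc)
  refine hprim.congr fun x hx => ?_
  rw [uIcc_of_le hab] at hx
  simp only [Pi.add_apply]
  linarith [(hu a x ha hx.1).2]

theorem LocAC.continuousOn {u : ℝ → ℝ} (hu : LocAC u) : ContinuousOn u (Ioi 0) := by
  intro r (hr : 0 < r)
  have hnhds : Icc (r / 2) (r + 1) ∈ 𝓝 r := Icc_mem_nhds (by linarith) (by linarith)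
  have hcont :=
    (hu.absolutelyContinuousOnInterval (b := r + 1) (half_pos hr) (by linarith)).continuousOn
  rw [uIcc_of_le (by linarith)] at hcont
  exact ((hcont r (mem_of_mem_nhds hnhds)).continuousAt hnhds).continuousWithinAt

theorem LocAC.integral_Ioi_deriv_mul_sin {u : ℝ → ℝ} (hu : LocAC u)
    (hint : IntegrableOn (fun r => deriv u r * Real.sin (u r)) (Ioi 0)) {a b : ℝ}
    (ha : Tendsto u (𝓝[>] 0) (𝓝 a)) (hb : Tendsto u atTop (𝓝 b)) :
    ∫ r in Ioi 0, deriv u r * Real.sin (u r) = Real.cos a - Real.cos b := by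
  have hlim := intervalIntegral_tendsto_integral_Ioi_of_tendsto_nhdsGT hint
    (l := 𝓝[>] 0 ×ˢ atTop) tendsto_fst tendsto_snd
  have hcos : Tendsto (fun p : ℝ × ℝ => Real.cos (u p.1) - Real.cos (u p.2))
      (𝓝[>] 0 ×ˢ atTop) (𝓝 (Real.cos a - Real.cos b)) :=
    ((Real.continuous_cos.tendsto a).comp (ha.comp tendsto_fst)).sub
      ((Real.continuous_cos.tendsto b).comp (hb.comp tendsto_snd))
  refine tendsto_nhds_unique (hlim.congr' ?_) hcos
  filter_upwards [prod_mem_prod (Ioo_mem_nhdsGT one_pos) (Ici_mem_atTop 1)]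
    with ⟨ε, R⟩ ⟨hε, hR⟩
  have hftc := (hu.absolutelyContinuousOnInterval hε.1 (hε.2.le.trans hR)
    ).integral_deriv_comp_mul_deriv Real.lipschitzWith_cos Real.hasDerivAt_cos
  calc ∫ r in ε..R, deriv u r * Real.sin (u r)
      = -∫ r in ε..R, -Real.sin (u r) * deriv u r := by
        rw [← intervalIntegral.integral_neg]
        exact intervalIntegral.integral_congr fun r _ => by ring
    _ = Real.cos (u ε) - Real.cos (u R) := by rw [hftc]; ring

theorem abs_mul_le_half_mul_energyDensity {p s c r : ℝ} (hc : 1 ≤ c ^ 2) (hr : 0 < r) :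
    |p * s| ≤ 1 / 2 * ((p ^ 2 + c ^ 2 * s ^ 2 / r ^ 2) * r) := by
  have hamgm : 2 * |p * s| * r ≤ p ^ 2 * r ^ 2 + s ^ 2 := by
    rw [abs_mul]
    nlinarith [sq_nonneg (|p| * r - |s|), sq_abs p, sq_abs s]
  rw [show (p ^ 2 + c ^ 2 * s ^ 2 / r ^ 2) * r = (p ^ 2 * r ^ 2 + c ^ 2 * s ^ 2) / r by
    field_simp, mul_div_assoc', le_div_iff₀ hr]
  nlinarith [sq_nonneg s]

theorem LocAC.integrableOn_deriv_mul_sin {m : ℕ} (hm : 1 ≤ m) {u : ℝ → ℝ} (hu : LocAC u)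
    (hE : IntegrableOn (fun r => (deriv u r ^ 2 + (m:ℝ)^2 * Real.sin (u r) ^ 2 / r ^ 2) * r)
      (Ioi 0)) :
    IntegrableOn (fun r => deriv u r * Real.sin (u r)) (Ioi 0) := by
  have hm2 : (1 : ℝ) ≤ (m : ℝ) ^ 2 := one_le_pow₀ (by exact_mod_cast hm)
  refine Integrable.mono' (hE.const_mul (1 / 2)) ?_ ?_
  · exact (measurable_deriv u).aestronglyMeasurable.mul
      ((Real.continuous_sin.comp_continuousOn hu.continuousOn).aestronglyMeasurable
        measurableSet_Ioi)
  · filter_upwards [ae_restrict_mem measurableSet_Ioi] with r (hr : 0 < r)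
    exact abs_mul_le_half_mul_energyDensity hm2 hr

theorem integral_sq_deriv_add_div_mul_sin {m : ℕ} {u : ℝ → ℝ} {c : ℝ} (hc : c ^ 2 = (m : ℝ) ^ 2)
    (hE : IntegrableOn (fun r => (deriv u r ^ 2 + (m:ℝ)^2 * Real.sin (u r) ^ 2 / r ^ 2) * r)
      (Ioi 0))
    (hG : IntegrableOn (fun r => deriv u r * Real.sin (u r)) (Ioi 0)) :
    ∫ r in Ioi 0, (deriv u r + c / r * Real.sin (u r)) ^ 2 * r
      = 2 * corotE m u + 2 * c * ∫ r in Ioi 0, deriv u r * Real.sin (u r) := by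
  have hexpand : EqOn (fun r => (deriv u r + c / r * Real.sin (u r)) ^ 2 * r)
      (fun r => (deriv u r ^ 2 + (m:ℝ)^2 * Real.sin (u r) ^ 2 / r ^ 2) * r
        + 2 * c * (deriv u r * Real.sin (u r))) (Ioi 0) := fun r (hr : 0 < r) => by
    rw [← hc]
    field_simp
    ring
  rw [setIntegral_congr_fun measurableSet_Ioi hexpand, integral_add hE (hG.const_mul _),
    integral_const_mul, corotE]
  ring

/-- Bogomolny-type decomposition of the energy, and the resulting topological
lower bound `E(u) ≥ m |cos b − cos a|`. -/
theorem energy_topological_lower_bound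
    (m : ℕ) (hm : 1 ≤ m) (u : ℝ → ℝ) (hAC : LocAC u)
    (hEfin : IntegrableOn
      (fun r => (deriv u r ^ 2 + (m:ℝ)^2 * Real.sin (u r) ^ 2 / r ^ 2) * r)
      (Set.Ioi (0:ℝ)))
    (a b : ℝ)
    (ha : Tendsto u (nhdsWithin 0 (Set.Ioi 0)) (nhds a))
    (hb : Tendsto u atTop (nhds b)) :
    corotE m u =
      (1/2) * (∫ r in Set.Ioi (0:ℝ),
          (deriv u r + ((m:ℝ)/r) * Real.sin (u r)) ^ 2 * r)
        + m * (Real.cos b - Real.cos a) ∧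
    (m:ℝ) * |Real.cos b - Real.cos a| ≤ corotE m u := by
  have hG := hAC.integrableOn_deriv_mul_sin hm hEfin
  have hS := hAC.integral_Ioi_deriv_mul_sin hG ha hb
  have hplus := integral_sq_deriv_add_div_mul_sin (c := m) rfl hEfin hG
  have hminus := integral_sq_deriv_add_div_mul_sin (c := -m) (neg_sq _) hEfin hG
  have hnonneg (c : ℝ) : 0 ≤ ∫ r in Ioi 0, (deriv u r + c / r * Real.sin (u r)) ^ 2 * r :=
    setIntegral_nonneg measurableSet_Ioi fun r (hr : 0 < r) => by positivity
  have hplus_nonneg := hnonneg m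
  have hminus_nonneg := hnonneg (-m)
  rw [hS] at hplus hminus
  refine ⟨by linarith, ?_⟩
  rcases abs_cases (Real.cos b - Real.cos a) with ⟨habs, -⟩ | ⟨habs, -⟩ <;> rw [habs] <;> linarith
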